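/- Let f ∈ ℂ[x0,x1,x2,x3,x4] be quasi-homogeneous of degree 26 with respect to the weights (1,2,5,7,13) (family №102, X_26 ⊂ P(1,2,5,7,13)). If f is quasi-smooth, then the coefficient of the monomial x4^2 in f is nonzero and the coefficient of the monomial x2·x3^3 in f is nonzero. -/

import Mathlib

/-!
Quasi-smoothness at a coordinate point `eⱼ` forces `f` to contain a monomial `xᵢ xⱼᵏ`: only such
monomials contribute to `f(eⱼ)` and to the partial derivatives at `eⱼ`. For the weights
`(1,2,5,7,13)` and degree `26`, the equation `aᵢ + 13k = 26` leaves only `x₄²`, and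
`aᵢ + 7k = 26` leaves only `x₂x₃³`.
-/

open MvPolynomial

/-- `f` is quasi-homogeneous of degree `d` with respect to the weights `a`:
every monomial occurring in `f` with nonzero coefficient has weighted degree `d`. -/
def IsQuasiHomogeneous (a : Fin 5 → ℕ) (d : ℕ) (f : MvPolynomial (Fin 5) ℂ) : Prop :=
  ∀ m ∈ f.support, ∑ i, a i * m i = d

/-- `f` is quasi-smooth: at every nonzero point of the affine cone `{f = 0} ⊆ ℂ⁵`,
some partial derivative of `f` does not vanish. -/
def IsQuasiSmooth (f : MvPolynomial (Fin 5) ℂ) : Prop :=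
  ∀ x : Fin 5 → ℂ, x ≠ 0 → eval x f = 0 → ∃ i, eval x (pderiv i f) ≠ 0

lemma eval_piSingle_one_eq_zero {σ R : Type*} [CommSemiring R] [DecidableEq σ]
    (g : MvPolynomial σ R) (j : σ) (h : ∀ k, coeff (Finsupp.single j k) g = 0) :
    eval (Pi.single j 1) g = 0 := by
  rw [eval_eq]
  refine Finset.sum_eq_zero fun m _ => ?_
  by_cases hm : m = Finsupp.single j (m j)
  · rw [hm, h, zero_mul]
  · obtain ⟨i, hi⟩ : ∃ i, m i ≠ Finsupp.single j (m j) i := by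
      by_contra! h'
      exact hm (Finsupp.ext h')
    have hij : i ≠ j := by rintro rfl; simp at hi
    rw [Finsupp.single_eq_of_ne hij] at hi
    rw [Finset.prod_eq_zero (Finsupp.mem_support_iff.2 hi), mul_zero]
    simp [Pi.single_eq_of_ne hij, zero_pow hi]

lemma IsQuasiHomogeneous.coeff_zero_eq_zero {a : Fin 5 → ℕ} {d : ℕ}
    {f : MvPolynomial (Fin 5) ℂ} (hf : IsQuasiHomogeneous a d f) (hd : d ≠ 0) :
    coeff 0 f = 0 := by
  by_contra h
  exact hd (by simpa using (hf 0 (mem_support_iff.2 h)).symm)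

lemma IsQuasiHomogeneous.weight_single_add_single {a : Fin 5 → ℕ} {d : ℕ}
    {f : MvPolynomial (Fin 5) ℂ} (hf : IsQuasiHomogeneous a d f) {i j : Fin 5} {k : ℕ}
    (h : coeff (Finsupp.single i 1 + Finsupp.single j k) f ≠ 0) :
    a i + a j * k = d := by
  have := hf _ (mem_support_iff.2 h)
  simpa [Finsupp.single_apply, mul_add, Finset.sum_add_distrib] using this

lemma IsQuasiSmooth.exists_coeff_single_add_single_ne_zero {f : MvPolynomial (Fin 5) ℂ}
    (hf : IsQuasiSmooth f) (h0 : coeff 0 f = 0) (j : Fin 5) :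
    ∃ i k, coeff (Finsupp.single i 1 + Finsupp.single j k) f ≠ 0 := by
  by_contra! hcoeff
  have hpure : ∀ k, coeff (Finsupp.single j k) f = 0 := by
    rintro (_ | k)
    · simpa using h0
    · simpa [← Finsupp.single_add, add_comm 1 k] using hcoeff j k
  have hx : (Pi.single j 1 : Fin 5 → ℂ) ≠ 0 := by simp
  obtain ⟨i, hi⟩ := hf _ hx (eval_piSingle_one_eq_zero f j hpure)
  refine hi (eval_piSingle_one_eq_zero _ j fun k => ?_)
  rw [coeff_pderiv, add_comm, hcoeff, zero_mul]

theorem stmt_2 (f : MvPolynomial (Fin 5) ℂ)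
    (hqh : IsQuasiHomogeneous ![1,2,5,7,13] 26 f)
    (hqs : IsQuasiSmooth f) :
    f.coeff (Finsupp.single (4 : Fin 5) 2) ≠ 0 ∧ f.coeff (Finsupp.single (2 : Fin 5) 1 + Finsupp.single (3 : Fin 5) 3) ≠ 0 := by
  have h0 := hqh.coeff_zero_eq_zero (by norm_num)
  constructor
  · obtain ⟨i, k, h⟩ := hqs.exists_coeff_single_add_single_ne_zero h0 4
    have hw := hqh.weight_single_add_single h
    obtain ⟨rfl, rfl⟩ : i = 4 ∧ k = 1 := by fin_cases i <;> simp at hw ⊢ <;> omega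
    simpa [← Finsupp.single_add] using h
  · obtain ⟨i, k, h⟩ := hqs.exists_coeff_single_add_single_ne_zero h0 3
    have hw := hqh.weight_single_add_single h
    obtain ⟨rfl, rfl⟩ : i = 2 ∧ k = 3 := by fin_cases i <;> simp at hw ⊢ <;> omega
    exact h
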